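/- arXiv:2404.03761 — 3 statements merged into one kernel-verified Lean document; each statement's English description precedes it below -/
import Mathlib

section
/- Let c = (c_i) be a sequence in ℓ^p(ℕ) with 0 < p ≤ q ≤ ∞. Then the best s-term approximation error satisfies σ_s(c)_q ≤ s^{1/q − 1/p} ‖c‖_p, where σ_s(c)_q = inf{ ‖c − z‖_q : z has at most s nonzero entries }. -/
/-- Stechkin's inequality: for `c ∈ ℓ^p(ℕ)` with `0 < p ≤ q`, the best `s`-term
approximation error in the `ℓ^q`-norm satisfies `σ_s(c)_q ≤ s^{1/q - 1/p} ‖c‖_p`. -/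
theorem stechkin_best_s_term (p q : ℝ) (hp : 0 < p) (hpq : p ≤ q)
    (c : ℕ → ℝ) (hc : Summable fun i => |c i| ^ p) (s : ℕ) (hs : 1 ≤ s) :
    sInf { t : ℝ | ∃ z : ℕ → ℝ,
        (∃ T : Finset ℕ, T.card ≤ s ∧ ∀ i ∉ T, z i = 0) ∧
        t = (∑' i : ℕ, |c i - z i| ^ q) ^ (1 / q) } ≤
      (s : ℝ) ^ (1 / q - 1 / p) * (∑' i : ℕ, |c i| ^ p) ^ (1 / p) := by
  have hq : 0 < q := lt_of_lt_of_le hp hpq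
  have hs0 : (0 : ℝ) < s := by exact_mod_cast hs
  have hnn : ∀ i, 0 ≤ |c i| ^ p := fun i => Real.rpow_nonneg (abs_nonneg _) p
  set A := ∑' i, |c i| ^ p with hAdef
  have hA0 : 0 ≤ A := tsum_nonneg hnn
  set S := { t : ℝ | ∃ z : ℕ → ℝ,
      (∃ T : Finset ℕ, T.card ≤ s ∧ ∀ i ∉ T, z i = 0) ∧
      t = (∑' i : ℕ, |c i - z i| ^ q) ^ (1 / q) } with hSdef
  have hbdd : BddBelow S := by
    refine ⟨0, fun t ht => ?_⟩
    obtain ⟨z, _, rfl⟩ := ht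
    exact Real.rpow_nonneg (tsum_nonneg fun i => Real.rpow_nonneg (abs_nonneg _) q) _
  have hRHS0 : 0 ≤ (s : ℝ) ^ (1 / q - 1 / p) * A ^ (1 / p) :=
    mul_nonneg (Real.rpow_nonneg hs0.le _) (Real.rpow_nonneg hA0 _)
  rcases eq_or_lt_of_le hA0 with hA | hA
  · -- A = 0 : c is identically zero
    have hz : ∀ i, c i = 0 := by
      intro i
      have h1 : |c i| ^ p ≤ 0 := by
        calc |c i| ^ p ≤ A := Summable.le_tsum hc i (fun j _ => hnn j)
        _ = 0 := hA.symm
      have h2 : |c i| = 0 :=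
        (Real.rpow_eq_zero (abs_nonneg _) hp.ne').mp (le_antisymm h1 (hnn i))
      exact abs_eq_zero.mp h2
    have hmem : (0:ℝ) ∈ S := by
      rw [hSdef]
      refine ⟨0, ⟨∅, by simp⟩, ?_⟩
      simp only [Pi.zero_apply, sub_zero]
      have h3 : (fun i : ℕ => |c i| ^ q) = fun _ => (0:ℝ) := by
        funext i; simp [hz i, Real.zero_rpow hq.ne']
      rw [h3, tsum_zero, Real.zero_rpow (by positivity : 1/q ≠ 0)]
    exact csInf_le_of_le hbdd hmem hRHS0
  · -- A > 0
    have hB : 0 < A / s := div_pos hA hs0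
    have hTfin : {i : ℕ | A / s < |c i| ^ p}.Finite := by
      have hev : ∀ᶠ i in Filter.cofinite, |c i| ^ p < A / s :=
        hc.tendsto_cofinite_zero.eventually_lt_const hB
      exact (Filter.eventually_cofinite.mp hev).subset
        (fun i hi => not_lt.mpr (le_of_lt hi))
    set T := hTfin.toFinset with hTdef
    have hmemT : ∀ i, i ∈ T ↔ A / s < |c i| ^ p := fun i => by
      rw [hTdef, Set.Finite.mem_toFinset]; rfl
    have hcard : T.card ≤ s := by
      have h1 : T.card • (A / s) ≤ ∑ i ∈ T, |c i| ^ p :=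
        Finset.card_nsmul_le_sum T _ _ (fun i hi => ((hmemT i).mp hi).le)
      have h2 : ∑ i ∈ T, |c i| ^ p ≤ A := Summable.sum_le_tsum T (fun i _ => hnn i) hc
      have h3 : (T.card : ℝ) * (A / s) ≤ A := by
        rw [← nsmul_eq_mul]; exact h1.trans h2
      have h3' : (T.card : ℝ) * A ≤ (s:ℝ) * A := by
        have h5 := mul_le_mul_of_nonneg_right h3 hs0.le
        rw [mul_assoc, div_mul_cancel₀ _ hs0.ne'] at h5
        linarith
      have h4 : (T.card : ℝ) ≤ s := le_of_mul_le_mul_right h3' hA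
      exact_mod_cast h4
    set e := q / p - 1 with hedef
    have he0 : 0 ≤ e := by
      rw [hedef, sub_nonneg, le_div_iff₀ hp, one_mul]; exact hpq
    have hkey : ∀ i, i ∉ T → |c i| ^ q ≤ (A / s) ^ e * |c i| ^ p := by
      intro i hi
      have hle : |c i| ^ p ≤ A / s := not_lt.mp (fun h => hi ((hmemT i).mpr h))
      have h1 : |c i| ^ q = (|c i| ^ p) ^ (q / p) := by
        rw [← Real.rpow_mul (abs_nonneg _), mul_div_cancel₀ _ hp.ne']
      have h2 : (|c i| ^ p) ^ (q / p) = (|c i| ^ p) ^ e * |c i| ^ p := by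
        rw [show q/p = e + 1 by rw [hedef]; ring,
          Real.rpow_add' (hnn i) (by rw [hedef, sub_add_cancel]; positivity),
          Real.rpow_one]
      rw [h1, h2]
      exact mul_le_mul_of_nonneg_right
        (Real.rpow_le_rpow (hnn i) hle he0) (hnn i)
    set z : ℕ → ℝ := fun i => if i ∈ T then c i else 0 with hzdef
    have hfun : ∀ i, |c i - z i| ^ q = if i ∈ T then 0 else |c i| ^ q := by
      intro i
      by_cases hi : i ∈ T <;> simp [hzdef, hi, Real.zero_rpow hq.ne']
    have hg_le : ∀ i, |c i - z i| ^ q ≤ (A / s) ^ e * |c i| ^ p := by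
      intro i
      rw [hfun i]
      by_cases hi : i ∈ T
      · simp only [hi, if_true]
        positivity
      · simpa [hi] using hkey i hi
    have hg_nn : ∀ i, 0 ≤ |c i - z i| ^ q := fun i =>
      Real.rpow_nonneg (abs_nonneg _) q
    have hsumg : Summable (fun i => |c i - z i| ^ q) :=
      Summable.of_nonneg_of_le hg_nn hg_le (hc.mul_left _)
    have htsum : (∑' i, |c i - z i| ^ q) ≤ (A / s) ^ e * A := by
      calc (∑' i, |c i - z i| ^ q) ≤ ∑' i, (A / s) ^ e * |c i| ^ p :=
            Summable.tsum_le_tsum hg_le hsumg (hc.mul_left _)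
        _ = (A / s) ^ e * A := by rw [tsum_mul_left]
    have hmem : ((∑' i, |c i - z i| ^ q) ^ (1/q)) ∈ S := by
      rw [hSdef]
      exact ⟨z, ⟨T, hcard, fun i hi => by simp [hzdef, hi]⟩, rfl⟩
    refine csInf_le_of_le hbdd hmem ?_
    calc (∑' i, |c i - z i| ^ q) ^ (1/q)
        ≤ ((A / s) ^ e * A) ^ (1/q) :=
          Real.rpow_le_rpow (tsum_nonneg hg_nn) htsum (by positivity)
      _ = (s : ℝ) ^ (1 / q - 1 / p) * A ^ (1 / p) := by
          have hstep : ((A/s)^e * A) = A ^ (e+1) * (s:ℝ) ^ (-e) := by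
            rw [Real.div_rpow hA0 hs0.le, Real.rpow_add hA, Real.rpow_one,
              Real.rpow_neg hs0.le]
            ring
          rw [hstep, Real.mul_rpow (by positivity) (by positivity),
            ← Real.rpow_mul hA0, ← Real.rpow_mul hs0.le]
          have hqp : (q/p) * (1/q) = 1/p := by
            field_simp
          have h1 : (e+1) * (1/q) = 1/p := by
            have h' : (e+1) * (1/q) = (q/p) * (1/q) := by rw [hedef]; ring
            rw [h', hqp]
          have h2 : (-e) * (1/q) = 1/q - 1/p := by
            have h' : (-e) * (1/q) = 1/q - (q/p) * (1/q) := by rw [hedef]; ring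
            rw [h', hqp]
          rw [h1, h2, mul_comm]
end

section
/- For any finite lower set S ⊆ ℕ₀^d with |S| = s, the weighted cardinality |S|_u = Σ_{ν ∈ S} ∏_k (2ν_k + 1) satisfies |S|_u ≤ s². -/
/-- For any finite lower set `S ⊆ ℕ₀^d` with `|S| = s`, the weighted cardinality
`|S|_u = Σ_{ν∈S} ∏_k (2ν_k+1)` satisfies `|S|_u ≤ s²`. -/
theorem weighted_card_le_sq_of_lower (d s : ℕ) (S : Finset (Fin d → ℕ))
    (hlower : ∀ ν ∈ S, ∀ μ : Fin d → ℕ, μ ≤ ν → μ ∈ S)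
    (hcard : S.card = s) :
    (∑ ν ∈ S, ∏ k, (2 * ν k + 1)) ≤ s ^ 2 := by
  have hsum : (∑ ν ∈ S, ∏ k, (2 * ν k + 1)) =
      (S.sigma (fun ν => Finset.Icc (0 : Fin d → ℕ) (fun k => 2 * ν k))).card := by
    rw [Finset.card_sigma]
    refine Finset.sum_congr rfl fun ν _ => ?_
    rw [Pi.card_Icc]
    simp [Nat.card_Icc]
  rw [hsum]
  have hle : (S.sigma (fun ν => Finset.Icc (0 : Fin d → ℕ) (fun k => 2 * ν k))).card ≤
      (S ×ˢ S).card := by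
    apply Finset.card_le_card_of_injOn
      (fun p => ((fun k => min (p.2 k) (p.1 k)), (fun k => min (p.1 k) (2 * p.1 k - p.2 k))))
    · rintro ⟨ν, μ⟩ hp
      rw [Finset.mem_coe, Finset.mem_sigma, Finset.mem_Icc] at hp
      obtain ⟨hν, _, hμ⟩ := hp
      rw [Finset.mem_coe, Finset.mem_product]
      exact ⟨hlower ν hν _ (fun k => min_le_right _ _),
        hlower ν hν _ (fun k => min_le_left _ _)⟩
    · rintro ⟨ν, μ⟩ hp ⟨ν', μ'⟩ hq h
      rw [Finset.mem_coe, Finset.mem_sigma, Finset.mem_Icc] at hp hq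
      have hb : ∀ k, μ k ≤ 2 * ν k := fun k => hp.2.2 k
      have hb' : ∀ k, μ' k ≤ 2 * ν' k := fun k => hq.2.2 k
      have e1 : ∀ k, min (μ k) (ν k) = min (μ' k) (ν' k) :=
        fun k => congrFun (congrArg Prod.fst h) k
      have e2 : ∀ k, min (ν k) (2 * ν k - μ k) = min (ν' k) (2 * ν' k - μ' k) :=
        fun k => congrFun (congrArg Prod.snd h) k
      have key : ∀ k, ν k = ν' k ∧ μ k = μ' k := by
        intro k
        have h1 := e1 k
        have h2 := e2 k
        have h3 := hb k
        have h4 := hb' k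
        simp only [Nat.min_def] at h1 h2
        clear e1 e2 h hp hq hlower hsum
        split_ifs at h1 h2 <;> omega
      have hνν : ν = ν' := funext fun k => (key k).1
      subst hνν
      have hμμ : μ = μ' := funext fun k => (key k).2
      subst hμμ
      rfl
  rwa [Finset.card_product, hcard, ← sq] at hle
end

section
/- Any anchored set S ⊆ F of multi-indices with |S| ≤ s is contained in the hyperbolic-cross-type set Λ_s = { ν ∈ F : ∏_{k=1}^{s−1}(ν_k + 1) ≤ s and ν_k = 0 for all k ≥ s }. -/
/-- Any anchored set `S` of multi-indices (finitely supported elements of `ℕ₀^ℕ`,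
indexed here from `0`) with `|S| ≤ s` is contained in the hyperbolic-cross-type set
`Λ_s = {ν : ∏_{k<s-1} (ν_k + 1) ≤ s and ν_k = 0 for all k ≥ s-1}`. -/
theorem anchored_subset_hyperbolic_cross (s : ℕ) (hs : 1 ≤ s)
    (S : Set (ℕ → ℕ)) (hSfin : S.Finite) (hcard : S.ncard ≤ s)
    (hsupp : ∀ ν ∈ S, (Function.support ν).Finite)
    (hlower : ∀ ν ∈ S, ∀ μ : ℕ → ℕ, μ ≤ ν → μ ∈ S)
    (hanchored : ∀ j : ℕ, Pi.single j 1 ∈ S → ∀ i ≤ j, Pi.single i 1 ∈ S) :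
    ∀ ν ∈ S, (∏ k ∈ Finset.range (s - 1), (ν k + 1)) ≤ s ∧ ∀ k, s - 1 ≤ k → ν k = 0 := by
  classical
  intro ν hν
  have h0 : (0 : ℕ → ℕ) ∈ S := hlower ν hν 0 (fun k => Nat.zero_le _)
  have hzero : ∀ k, s - 1 ≤ k → ν k = 0 := by
    intro k hk
    by_contra hne
    have hsingle : Pi.single k 1 ∈ S := by
      apply hlower ν hν
      intro j
      rcases eq_or_ne j k with rfl | hjk
      · simpa using Nat.one_le_iff_ne_zero.mpr hne
      · simp [Pi.single_apply, hjk]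
    have hall : ∀ i ≤ k, Pi.single i 1 ∈ S := hanchored k hsingle
    set T : Finset (ℕ → ℕ) :=
      insert 0 ((Finset.range (k+1)).image (fun i => Pi.single i (1:ℕ))) with hT
    have hTsub : ↑T ⊆ S := by
      intro μ hμ
      simp only [hT, Finset.coe_insert, Set.mem_insert_iff, Finset.coe_image,
        Set.mem_image, Finset.mem_coe, Finset.mem_range] at hμ
      rcases hμ with rfl | ⟨i, hi, rfl⟩
      · exact h0
      · exact hall i (Nat.lt_succ_iff.mp hi)
    have hTcard : T.card = k + 2 := by
      rw [hT, Finset.card_insert_of_notMem, Finset.card_image_of_injOn]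
      · simp
      · intro a _ b _ hab
        by_contra hab'
        have := congrFun hab a
        simp [Pi.single_apply, hab'] at this
      · intro h
        simp only [Finset.mem_image] at h
        obtain ⟨i, _, h⟩ := h
        have := congrFun h i
        simp at this
    have hle : T.card ≤ S.ncard := by
      rw [← Set.ncard_coe_finset]
      exact Set.ncard_le_ncard hTsub hSfin
    omega
  refine ⟨?_, hzero⟩
  set B : Finset (ℕ → ℕ) :=
    ((Finset.range (s-1)).pi (fun k => Finset.range (ν k + 1))).image
      (fun f k => if h : k ∈ Finset.range (s-1) then f k h else 0) with hB
  have hBsub : ↑B ⊆ S := by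
    intro μ hμ
    simp only [hB, Finset.coe_image, Set.mem_image, Finset.mem_coe, Finset.mem_pi] at hμ
    obtain ⟨f, hf, rfl⟩ := hμ
    apply hlower ν hν
    intro k
    by_cases hk : k ∈ Finset.range (s-1)
    · simp only [hk, dif_pos]
      have := hf k hk
      simp only [Finset.mem_range] at this
      omega
    · simp [hk]
  have hBcard : B.card = ∏ k ∈ Finset.range (s-1), (ν k + 1) := by
    rw [hB, Finset.card_image_of_injOn]
    · rw [Finset.card_pi]
      simp
    · intro f hf g hg hfg
      funext k hk
      have h2 := congrFun hfg k
      simp only [dif_pos hk] at h2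
      exact h2
  have hle : B.card ≤ S.ncard := by
    rw [← Set.ncard_coe_finset]
    exact Set.ncard_le_ncard hBsub hSfin
  omega
end
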